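/- Let σ be a positive definite d×d density matrix and let T′(ρ) = Σ_{j=1}^m K_j ρ K_j† be a completely positive map given by Kraus operators K_j, satisfying KMS detailed balance with respect to σ, and such that O := T′†(I) = Σ_j K_j† K_j satisfies O ≤ I in the positive semidefinite order. Define the rejection Kraus operator K := (σ^{1/2}(I − O)σ^{1/2})^{1/2} σ^{−1/2}, where (·)^{1/2} denotes the positive semidefinite square root. Then the map M(ρ) := T′(ρ) + K ρ K† is trace-preserving and satisfies KMS detailed balance with respect to σ (hence M(σ) = σ). -/

import Mathlib

open scoped Matrix.Norms.L2Operator ComplexOrder Classical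
open Matrix

/-- Positive semidefinite square root (extended by `0` off the PSD matrices). -/
noncomputable def psdSqrt {d : ℕ} (A : Matrix (Fin d) (Fin d) ℂ) : Matrix (Fin d) (Fin d) ℂ :=
  if h : A.PosSemidef then
    (h.1.eigenvectorUnitary : Matrix (Fin d) (Fin d) ℂ) *
      diagonal ((↑) ∘ Real.sqrt ∘ h.1.eigenvalues) *
      (star h.1.eigenvectorUnitary : Matrix (Fin d) (Fin d) ℂ)
  else 0

/-- The KMS inner product `⟨X, Y⟩_{σ,1/2} = Tr(Xᴴ σ^{1/2} Y σ^{1/2})`, expressed in terms of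
`s = σ^{1/2}`. -/
noncomputable def kmsInner {d : ℕ} (s X Y : Matrix (Fin d) (Fin d) ℂ) : ℂ :=
  (Xᴴ * s * Y * s).trace

/-- `Td` is the Hilbert–Schmidt adjoint of `T`. -/
def IsHSAdjoint {d : ℕ}
    (T Td : Matrix (Fin d) (Fin d) ℂ →ₗ[ℂ] Matrix (Fin d) (Fin d) ℂ) : Prop :=
  ∀ X Y : Matrix (Fin d) (Fin d) ℂ, ((Td X)ᴴ * Y).trace = (Xᴴ * T Y).trace

/-- `T` satisfies KMS detailed balance with respect to `σ`. -/
def KMSDetailedBalance {d : ℕ} (σ : Matrix (Fin d) (Fin d) ℂ)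
    (T : Matrix (Fin d) (Fin d) ℂ →ₗ[ℂ] Matrix (Fin d) (Fin d) ℂ) : Prop :=
  ∀ Td, IsHSAdjoint T Td →
    ∀ X Y : Matrix (Fin d) (Fin d) ℂ,
      kmsInner (psdSqrt σ) X (Td Y) = kmsInner (psdSqrt σ) (Td X) Y

/-- The conjugation map `ρ ↦ K ρ Kᴴ` as a linear map. -/
noncomputable def sandwich {d : ℕ} (K : Matrix (Fin d) (Fin d) ℂ) :
    Matrix (Fin d) (Fin d) ℂ →ₗ[ℂ] Matrix (Fin d) (Fin d) ℂ where
  toFun ρ := K * ρ * Kᴴ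
  map_add' X Y := by simp [Matrix.mul_add, Matrix.add_mul]
  map_smul' c X := by simp [Matrix.mul_smul, Matrix.smul_mul]

/-- The completely positive map `ρ ↦ Σ_j K_j ρ K_jᴴ` given by Kraus operators. -/
noncomputable def krausMap {d m : ℕ} (K : Fin m → Matrix (Fin d) (Fin d) ℂ) :
    Matrix (Fin d) (Fin d) ℂ →ₗ[ℂ] Matrix (Fin d) (Fin d) ℂ :=
  ∑ j : Fin m, sandwich (K j)

/-!
The Hilbert–Schmidt adjoint of `M` is `M†(X) = Σ K_jᴴ X K_j + Kᴴ X K`. Since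
`K σ^{1/2} = (σ^{1/2} (I - O) σ^{1/2})^{1/2}` is Hermitian, the rejection branch `X ↦ Kᴴ X K` is
KMS self-adjoint on its own, so detailed balance passes from `T'` to `M`. Moreover `Kᴴ K = I - O`
makes `M†` unital, which is trace preservation of `M`, and a unital KMS self-adjoint `M†` satisfies
`Tr(Xᴴ σ) = ⟨X, M†(I)⟩ = ⟨M†(X), I⟩ = Tr(Xᴴ M(σ))` for all `X`, whence `M(σ) = σ`.
-/

open scoped MatrixOrder

section

variable {d : ℕ}

lemma psdSqrt_eq_sqrt {A : Matrix (Fin d) (Fin d) ℂ} (hA : A.PosSemidef) :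
    psdSqrt A = CFC.sqrt A := by
  rw [psdSqrt, dif_pos hA, CFC.sqrt_eq_real_sqrt A hA.nonneg, cfcₙ_eq_cfc, hA.1.cfc_eq]
  rfl

lemma isHermitian_psdSqrt (A : Matrix (Fin d) (Fin d) ℂ) : (psdSqrt A).IsHermitian := by
  by_cases hA : A.PosSemidef
  · rw [psdSqrt_eq_sqrt hA]
    exact (CFC.sqrt_nonneg A).posSemidef.isHermitian
  · rw [psdSqrt, dif_neg hA]
    exact isHermitian_zero

lemma psdSqrt_mul_self {A : Matrix (Fin d) (Fin d) ℂ} (hA : A.PosSemidef) :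
    psdSqrt A * psdSqrt A = A := by
  rw [psdSqrt_eq_sqrt hA, CFC.sqrt_mul_sqrt_self A hA.nonneg]

lemma isUnit_psdSqrt {A : Matrix (Fin d) (Fin d) ℂ} (hA : A.PosDef) : IsUnit (psdSqrt A) := by
  rw [psdSqrt_eq_sqrt hA.posSemidef, CFC.isUnit_sqrt_iff A hA.posSemidef.nonneg]
  exact hA.isUnit

lemma sandwich_apply (L X : Matrix (Fin d) (Fin d) ℂ) : sandwich L X = L * X * Lᴴ := rfl

lemma krausMap_apply {m : ℕ} (K : Fin m → Matrix (Fin d) (Fin d) ℂ)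
    (X : Matrix (Fin d) (Fin d) ℂ) : krausMap K X = ∑ j, K j * X * (K j)ᴴ := by
  simp [krausMap, sandwich_apply]

lemma isHSAdjoint_sandwich (L : Matrix (Fin d) (Fin d) ℂ) :
    IsHSAdjoint (sandwich L) (sandwich Lᴴ) := by
  intro X Y
  simp only [sandwich_apply, conjTranspose_mul, conjTranspose_conjTranspose, Matrix.mul_assoc]
  rw [trace_mul_comm]
  simp only [Matrix.mul_assoc]

lemma IsHSAdjoint.add {T₁ T₂ Td₁ Td₂ : Matrix (Fin d) (Fin d) ℂ →ₗ[ℂ] Matrix (Fin d) (Fin d) ℂ}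
    (h₁ : IsHSAdjoint T₁ Td₁) (h₂ : IsHSAdjoint T₂ Td₂) :
    IsHSAdjoint (T₁ + T₂) (Td₁ + Td₂) := by
  intro X Y
  simp only [LinearMap.add_apply, conjTranspose_add, Matrix.add_mul, Matrix.mul_add, trace_add,
    h₁ X Y, h₂ X Y]

lemma isHSAdjoint_krausMap {m : ℕ} (K : Fin m → Matrix (Fin d) (Fin d) ℂ) :
    IsHSAdjoint (krausMap K) (krausMap fun j => (K j)ᴴ) := by
  intro X Y
  simp only [krausMap, LinearMap.sum_apply, conjTranspose_sum, Finset.sum_mul, Matrix.mul_sum,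
    trace_sum]
  exact Finset.sum_congr rfl fun j _ => isHSAdjoint_sandwich (K j) X Y

lemma IsHSAdjoint.unique {T Td Td' : Matrix (Fin d) (Fin d) ℂ →ₗ[ℂ] Matrix (Fin d) (Fin d) ℂ}
    (h : IsHSAdjoint T Td) (h' : IsHSAdjoint T Td') : Td = Td' := by
  ext X : 1
  rw [← conjTranspose_inj, ext_iff_trace_mul_right]
  intro Y
  rw [h X Y, h' X Y]

lemma IsHSAdjoint.trace_apply {T Td : Matrix (Fin d) (Fin d) ℂ →ₗ[ℂ] Matrix (Fin d) (Fin d) ℂ}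
    (h : IsHSAdjoint T Td) (hunital : Td 1 = 1) (X : Matrix (Fin d) (Fin d) ℂ) :
    (T X).trace = X.trace := by
  simpa [hunital] using (h 1 X).symm

def IsKMSSelfAdjoint (s : Matrix (Fin d) (Fin d) ℂ)
    (T : Matrix (Fin d) (Fin d) ℂ →ₗ[ℂ] Matrix (Fin d) (Fin d) ℂ) : Prop :=
  ∀ X Y, kmsInner s X (T Y) = kmsInner s (T X) Y

lemma kmsDetailedBalance_iff {σ : Matrix (Fin d) (Fin d) ℂ}
    {T Td : Matrix (Fin d) (Fin d) ℂ →ₗ[ℂ] Matrix (Fin d) (Fin d) ℂ} (h : IsHSAdjoint T Td) :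
    KMSDetailedBalance σ T ↔ IsKMSSelfAdjoint (psdSqrt σ) Td :=
  ⟨fun hT => hT Td h, fun hTd _ h' => by rwa [← h.unique h']⟩

lemma IsKMSSelfAdjoint.add {s : Matrix (Fin d) (Fin d) ℂ}
    {T₁ T₂ : Matrix (Fin d) (Fin d) ℂ →ₗ[ℂ] Matrix (Fin d) (Fin d) ℂ}
    (h₁ : IsKMSSelfAdjoint s T₁) (h₂ : IsKMSSelfAdjoint s T₂) :
    IsKMSSelfAdjoint s (T₁ + T₂) := by
  intro X Y
  have h₁' := h₁ X Y
  have h₂' := h₂ X Y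
  simp only [kmsInner, LinearMap.add_apply, conjTranspose_add, Matrix.add_mul, Matrix.mul_add,
    trace_add] at h₁' h₂' ⊢
  rw [h₁', h₂']

/-- Both sides reduce to `Tr(Xᴴ (L s) Y (L s))`. -/
lemma isKMSSelfAdjoint_sandwich_conjTranspose {s L : Matrix (Fin d) (Fin d) ℂ}
    (h : s * Lᴴ = L * s) : IsKMSSelfAdjoint s (sandwich Lᴴ) := by
  intro X Y
  simp only [kmsInner, sandwich_apply, conjTranspose_conjTranspose, conjTranspose_mul]
  have hL : Xᴴ * s * (Lᴴ * Y * L) * s = Xᴴ * (s * Lᴴ) * Y * (L * s) := by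
    simp only [Matrix.mul_assoc]
  have hR : Lᴴ * (Xᴴ * L) * s * Y * s = Lᴴ * (Xᴴ * (L * s) * Y * s) := by
    simp only [Matrix.mul_assoc]
  rw [hL, hR, h, trace_mul_comm Lᴴ, Matrix.mul_assoc _ s Lᴴ, h]

lemma IsKMSSelfAdjoint.apply_mul_self {s : Matrix (Fin d) (Fin d) ℂ}
    {T Td : Matrix (Fin d) (Fin d) ℂ →ₗ[ℂ] Matrix (Fin d) (Fin d) ℂ}
    (hkms : IsKMSSelfAdjoint s Td) (hadj : IsHSAdjoint T Td) (hunital : Td 1 = 1) :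
    T (s * s) = s * s := by
  rw [ext_iff_trace_mul_left]
  intro X
  have hX := hkms Xᴴ 1
  rw [hunital] at hX
  simp only [kmsInner, Matrix.mul_one, conjTranspose_conjTranspose, Matrix.mul_assoc] at hX
  rw [← conjTranspose_conjTranspose X, ← hadj, ← hX, conjTranspose_conjTranspose]

/-- With `s = σ^{1/2}` and `P = I - O` this is the rejection Kraus operator `K`. -/
noncomputable def rejectionKraus (s P : Matrix (Fin d) (Fin d) ℂ) : Matrix (Fin d) (Fin d) ℂ :=
  psdSqrt (s * P * s) * s⁻¹

section rejectionKraus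

variable {s : Matrix (Fin d) (Fin d) ℂ}

lemma conjTranspose_rejectionKraus (hsH : s.IsHermitian) (P : Matrix (Fin d) (Fin d) ℂ) :
    (rejectionKraus s P)ᴴ = s⁻¹ * psdSqrt (s * P * s) := by
  rw [rejectionKraus, conjTranspose_mul, conjTranspose_nonsing_inv, hsH.eq,
    (isHermitian_psdSqrt _).eq]

lemma mul_conjTranspose_rejectionKraus (hs : IsUnit s) (hsH : s.IsHermitian)
    (P : Matrix (Fin d) (Fin d) ℂ) :
    s * (rejectionKraus s P)ᴴ = rejectionKraus s P * s := by
  have hdet := (isUnit_iff_isUnit_det s).1 hs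
  rw [conjTranspose_rejectionKraus hsH, rejectionKraus, ← Matrix.mul_assoc,
    mul_nonsing_inv s hdet, Matrix.one_mul, Matrix.mul_assoc _ s⁻¹ s, nonsing_inv_mul s hdet,
    Matrix.mul_one]

lemma conjTranspose_rejectionKraus_mul_self (hs : IsUnit s) (hsH : s.IsHermitian)
    {P : Matrix (Fin d) (Fin d) ℂ} (hP : P.PosSemidef) :
    (rejectionKraus s P)ᴴ * rejectionKraus s P = P := by
  have hdet := (isUnit_iff_isUnit_det s).1 hs
  have hsPs : (s * P * s).PosSemidef := by
    simpa only [hsH.eq] using hP.mul_mul_conjTranspose_same s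
  calc (rejectionKraus s P)ᴴ * rejectionKraus s P
      = s⁻¹ * (psdSqrt (s * P * s) * psdSqrt (s * P * s)) * s⁻¹ := by
        rw [conjTranspose_rejectionKraus hsH, rejectionKraus]; simp only [Matrix.mul_assoc]
    _ = (s⁻¹ * s) * P * (s * s⁻¹) := by rw [psdSqrt_mul_self hsPs]; simp only [Matrix.mul_assoc]
    _ = P := by rw [nonsing_inv_mul s hdet, mul_nonsing_inv s hdet, Matrix.one_mul, Matrix.mul_one]

end rejectionKraus

end

theorem rejection_completion_detailed_balance_general
    {d m : ℕ} (σ : Matrix (Fin d) (Fin d) ℂ) (hσ : σ.PosDef)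
    (K : Fin m → Matrix (Fin d) (Fin d) ℂ)
    (hdb : KMSDetailedBalance σ (krausMap K))
    (hO : (1 - ∑ j : Fin m, (K j)ᴴ * K j).PosSemidef) :
    let Krej : Matrix (Fin d) (Fin d) ℂ :=
      psdSqrt (psdSqrt σ * (1 - ∑ j : Fin m, (K j)ᴴ * K j) * psdSqrt σ) * (psdSqrt σ)⁻¹
    let M : Matrix (Fin d) (Fin d) ℂ →ₗ[ℂ] Matrix (Fin d) (Fin d) ℂ :=
      krausMap K + sandwich Krej
    (∀ X : Matrix (Fin d) (Fin d) ℂ, (M X).trace = X.trace) ∧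
      KMSDetailedBalance σ M ∧ M σ = σ := by
  intro Krej M
  have hs : IsUnit (psdSqrt σ) := isUnit_psdSqrt hσ
  have hsH : (psdSqrt σ).IsHermitian := isHermitian_psdSqrt σ
  have hKrej : Krej = rejectionKraus (psdSqrt σ) (1 - ∑ j, (K j)ᴴ * K j) := rfl
  set Md := krausMap (fun j => (K j)ᴴ) + sandwich Krejᴴ
  have hadj : IsHSAdjoint M Md := (isHSAdjoint_krausMap K).add (isHSAdjoint_sandwich Krej)
  have hunital : Md 1 = 1 := by
    simp only [Md, LinearMap.add_apply, krausMap_apply, sandwich_apply,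
      conjTranspose_conjTranspose, Matrix.mul_one, hKrej,
      conjTranspose_rejectionKraus_mul_self hs hsH hO, add_sub_cancel]
  have hkms : IsKMSSelfAdjoint (psdSqrt σ) Md :=
    ((kmsDetailedBalance_iff (isHSAdjoint_krausMap K)).1 hdb).add
      (isKMSSelfAdjoint_sandwich_conjTranspose (mul_conjTranspose_rejectionKraus hs hsH _))
  refine ⟨hadj.trace_apply hunital, (kmsDetailedBalance_iff hadj).2 hkms, ?_⟩
  simpa only [psdSqrt_mul_self hσ.posSemidef] using hkms.apply_mul_self hadj hunital

/-- trace-preserving completion of a detailed-balanced completely positive map by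
a rejection branch, preserving exact KMS detailed balance (hence fixing σ). -/
theorem rejection_completion_detailed_balance
    {d m : ℕ} (σ : Matrix (Fin d) (Fin d) ℂ) (hσ : σ.PosDef) (hσtr : σ.trace = 1)
    (K : Fin m → Matrix (Fin d) (Fin d) ℂ)
    (hdb : KMSDetailedBalance σ (krausMap K))
    (hO : (1 - ∑ j : Fin m, (K j)ᴴ * K j).PosSemidef) :
    let Krej : Matrix (Fin d) (Fin d) ℂ :=
      psdSqrt (psdSqrt σ * (1 - ∑ j : Fin m, (K j)ᴴ * K j) * psdSqrt σ) * (psdSqrt σ)⁻¹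
    let M : Matrix (Fin d) (Fin d) ℂ →ₗ[ℂ] Matrix (Fin d) (Fin d) ℂ :=
      krausMap K + sandwich Krej
    (∀ X : Matrix (Fin d) (Fin d) ℂ, (M X).trace = X.trace) ∧
      KMSDetailedBalance σ M ∧ M σ = σ :=
  rejection_completion_detailed_balance_general σ hσ K hdb hO
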